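/- Let 0 < α < 2 and b > 1, and let ν be a Lévy measure on ℝ^d satisfying the strict α-semistability relation ν = b^α T_{1/b} ν with span b. Then its inversion ν' satisfies ν' = b^{2-α} T_{1/b} ν', i.e. ν' is strictly (2-α)-semistable with the same span b. -/

import Mathlib

open MeasureTheory Set
open scoped ENNReal
noncomputable section

/-- `ℝ^d` with the Euclidean norm. -/
abbrev Rd (d : ℕ) := EuclideanSpace ℝ (Fin d)

/-- Geometric inversion `ι(x) = |x|⁻² x` (with the junk value `ι(0) = 0`). -/
def iota {d : ℕ} (x : Rd d) : Rd d := (‖x‖ ^ 2)⁻¹ • x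

/-- A Lévy measure on `ℝ^d`: `ν({0}) = 0` and `∫ (|x|² ∧ 1) ν(dx) < ∞`. -/
def IsLevyMeasure {d : ℕ} (ν : Measure (Rd d)) : Prop :=
  ν {0} = 0 ∧ (∫⁻ x, ENNReal.ofReal (min (‖x‖ ^ 2) 1) ∂ν) < ⊤

/-- The inversion `ν'` of a Lévy measure: `ν'(B) = ∫ 1_B(ι(x)) |x|² ν(dx)`. -/
def invLevy {d : ℕ} (ν : Measure (Rd d)) : Measure (Rd d) :=
  Measure.map iota ((ν.restrict {0}ᶜ).withDensity fun x => ENNReal.ofReal (‖x‖ ^ 2))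
/-- Dilation `T_b ν`, the pushforward of `ν` under `x ↦ b • x`. -/
def dilate {d : ℕ} (b : ℝ) (ν : Measure (Rd d)) : Measure (Rd d) :=
  Measure.map (fun x => b • x) ν

lemma iota_meas {d : ℕ} : Measurable (iota (d := d)) := by
  unfold iota
  exact ((measurable_norm.pow_const 2).inv).smul measurable_id

lemma iota_smul {d : ℕ} (c : ℝ) (hc : c ≠ 0) (x : Rd d) :
    iota (c • x) = c⁻¹ • iota x := by
  unfold iota
  rw [norm_smul, smul_smul, smul_smul]
  congr 1
  rw [mul_pow, Real.norm_eq_abs, sq_abs]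
  rcases eq_or_ne (‖x‖) 0 with h | h
  · simp [h]
  · field_simp

lemma key_scaling {d : ℕ} (α b : ℝ) (hb : 1 < b) (ν : Measure (Rd d))
    (hss : ν = ENNReal.ofReal (b ^ α) • dilate b⁻¹ ν) (s : Set (Rd d)) (hs : MeasurableSet s) :
    invLevy ν s
      = ENNReal.ofReal (b ^ α * (b⁻¹) ^ 2) * invLevy ν ((fun x : Rd d => b • x) ⁻¹' s) := by
  have hb0 : (0:ℝ) < b := lt_trans one_pos hb
  have hr : b⁻¹ ≠ 0 := inv_ne_zero hb0.ne'
  have hsm : Measurable (fun x : Rd d => b⁻¹ • x) := measurable_const_smul _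
  have hf : Measurable (fun x : Rd d => ENNReal.ofReal (‖x‖ ^ 2)) :=
    (measurable_norm.pow_const 2).ennreal_ofReal
  have happ : ∀ t : Set (Rd d), MeasurableSet t →
      invLevy ν t = ∫⁻ x in iota ⁻¹' t, ENNReal.ofReal (‖x‖ ^ 2) ∂(ν.restrict {0}ᶜ) := by
    intro t ht
    rw [invLevy, Measure.map_apply iota_meas ht, withDensity_apply _ (iota_meas ht)]
  have hres : ν.restrict {0}ᶜ = ENNReal.ofReal (b ^ α) •
      Measure.map (fun x : Rd d => b⁻¹ • x) (ν.restrict {0}ᶜ) := by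
    conv_lhs => rw [hss]
    rw [Measure.restrict_smul]
    congr 1
    have hpre : (fun x : Rd d => b⁻¹ • x) ⁻¹' ({0}ᶜ : Set (Rd d)) = ({0}ᶜ : Set (Rd d)) := by
      ext x; simp [hr]
    rw [dilate, Measure.restrict_map hsm (measurableSet_singleton 0).compl, hpre]
  have hsetEq : (fun x : Rd d => b⁻¹ • x) ⁻¹' (iota ⁻¹' s)
      = iota ⁻¹' ((fun x : Rd d => b • x) ⁻¹' s) := by
    ext x
    simp [mem_preimage, iota_smul _ hr, inv_inv]
  rw [happ s hs, happ _ ((measurable_const_smul b) hs)]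
  conv_lhs => rw [hres]
  rw [Measure.restrict_smul, lintegral_smul_measure, setLIntegral_map (iota_meas hs) hf hsm, hsetEq]
  have hInt : ∀ x : Rd d, ENNReal.ofReal (‖b⁻¹ • x‖ ^ 2)
      = ENNReal.ofReal ((b⁻¹) ^ 2) * ENNReal.ofReal (‖x‖ ^ 2) := by
    intro x
    rw [norm_smul, mul_pow, Real.norm_eq_abs, sq_abs, ENNReal.ofReal_mul (sq_nonneg _)]
  simp only [hInt]
  rw [lintegral_const_mul _ hf, ENNReal.ofReal_mul (by positivity), mul_assoc, smul_eq_mul]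

theorem statement7 {d : ℕ} (α b : ℝ) (hα : 0 < α) (hα2 : α < 2) (hb : 1 < b)
    (ν : Measure (Rd d)) (hν : IsLevyMeasure ν)
    (hss : ν = ENNReal.ofReal (b ^ α) • dilate b⁻¹ ν) :
    invLevy ν = ENNReal.ofReal (b ^ (2 - α)) • dilate b⁻¹ (invLevy ν) := by
  have hb0 : (0:ℝ) < b := lt_trans one_pos hb
  have hsm : Measurable (fun x : Rd d => b⁻¹ • x) := measurable_const_smul _
  have hconst : ENNReal.ofReal (b ^ (2 - α)) * ENNReal.ofReal (b ^ α * (b⁻¹) ^ 2) = 1 := by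
    have h2 : (b⁻¹ : ℝ) ^ 2 = b ^ (-2 : ℝ) := by
      rw [Real.rpow_neg hb0.le, show ((2:ℝ)) = ((2:ℕ):ℝ) by norm_num, Real.rpow_natCast,
        inv_pow]
    rw [← ENNReal.ofReal_mul (by positivity), h2, ← Real.rpow_add hb0, ← Real.rpow_add hb0,
      show (2 - α + (α + -2) : ℝ) = 0 by ring, Real.rpow_zero, ENNReal.ofReal_one]
  ext s hs
  rw [Measure.smul_apply, dilate, Measure.map_apply hsm hs, smul_eq_mul]
  have ht : MeasurableSet ((fun x : Rd d => b⁻¹ • x) ⁻¹' s) := hsm hs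
  rw [key_scaling α b hb ν hss _ ht]
  have hset : (fun x : Rd d => b • x) ⁻¹' ((fun x : Rd d => b⁻¹ • x) ⁻¹' s) = s := by
    ext x
    simp [mem_preimage, inv_smul_smul₀ hb0.ne']
  rw [hset, ← mul_assoc, hconst, one_mul]
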